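/- Assume all corner concentration values of all cells are strictly positive, that α > max{u₁⁺, u₂⁺, 0} over all Gauss points of all interior edges, and that Δt/Δx + Δt/Δy ≤ (1/6)·min{Φ_m/α, B₁, B₂}, where Φ_m is the minimum of Φ over all mesh corners, B₁ is the minimum over all interior vertical-edge Gauss points (i+1/2, j, β) and both signs ± of Φ_{i+1/2,j±1/2}/(α − u₁⁺_{i+1/2,j,β}), and B₂ is the analogous minimum over interior horizontal-edge Gauss points of Φ_{i±1/2,j+1/2}/(α − u₂⁺_{i,j+1/2,β}). Then the convection part H^c_{ij} := r̄_{ij}/3 + λ₁·∑_{β=1,2} w_β(û₁c_{i−1/2,j,β} − û₁c_{i+1/2,j,β}) + λ₂·∑_{β=1,2} w_β(û₂c_{i,j−1/2,β} − û₂c_{i,j+1/2,β}) is strictly positive for every interior cell (2 ≤ i ≤ N_x−1, 2 ≤ j ≤ N_y−1). -/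

import Mathlib

noncomputable section

namespace DG2D

/-- Gauss constant `μ₁ = (3+√3)/6`. -/
def mu1 : ℝ := (3 + Real.sqrt 3) / 6

/-- Gauss constant `μ₂ = (3-√3)/6`. -/
def mu2 : ℝ := (3 - Real.sqrt 3) / 6

/-- Value at the Gauss point `β` of an edge, from the two endpoint (corner) values:
`β = 1` gives `μ₁·a + μ₂·b`, `β = 2` gives `μ₂·a + μ₁·b`. -/
def ga (β : Fin 2) (a b : ℝ) : ℝ := if β = 0 then mu1 * a + mu2 * b else mu2 * a + mu1 * b

/-- Cell average `r̄_{ij} = (1/4)·∑ cΦ` over the four corners of `K_{ij}`.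
`Φ i j` denotes the corner value `Φ_{i+1/2,j+1/2}`; `c00 i j`, `c10 i j`, `c01 i j`,
`c11 i j` denote the corner values of `c` in cell `K_{ij}` at the corners
`(i-1/2,j-1/2)`, `(i+1/2,j-1/2)`, `(i-1/2,j+1/2)`, `(i+1/2,j+1/2)` respectively. -/
def rbar (Φ c00 c10 c01 c11 : ℕ → ℕ → ℝ) (i j : ℕ) : ℝ :=
  (c00 i j * Φ (i - 1) (j - 1) + c10 i j * Φ i (j - 1)
    + c01 i j * Φ (i - 1) j + c11 i j * Φ i j) / 4

/-- Trace `c⁻` (from `K_{ij}`) at Gauss point `β` of the vertical edge `x_{i+1/2}`, row `j`. -/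
def cmV (c10 c11 : ℕ → ℕ → ℝ) (i j : ℕ) (β : Fin 2) : ℝ := ga β (c10 i j) (c11 i j)

/-- Trace `c⁺` (from `K_{i+1,j}`) at Gauss point `β` of the vertical edge `x_{i+1/2}`, row `j`. -/
def cpV (c00 c01 : ℕ → ℕ → ℝ) (i j : ℕ) (β : Fin 2) : ℝ := ga β (c00 (i + 1) j) (c01 (i + 1) j)

/-- Trace `c⁻` (from `K_{ij}`) at Gauss point `β` of the horizontal edge `y_{j+1/2}`, column `i`. -/
def cmH (c01 c11 : ℕ → ℕ → ℝ) (i j : ℕ) (β : Fin 2) : ℝ := ga β (c01 i j) (c11 i j)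

/-- Trace `c⁺` (from `K_{i,j+1}`) at Gauss point `β` of the horizontal edge `y_{j+1/2}`. -/
def cpH (c00 c10 : ℕ → ℕ → ℝ) (i j : ℕ) (β : Fin 2) : ℝ := ga β (c00 i (j + 1)) (c10 i (j + 1))

/-- Jump `[c] = c⁺ - c⁻` at a vertical-edge Gauss point. -/
def jumpV (c00 c10 c01 c11 : ℕ → ℕ → ℝ) (i j : ℕ) (β : Fin 2) : ℝ :=
  cpV c00 c01 i j β - cmV c10 c11 i j β

/-- Jump `[c] = c⁺ - c⁻` at a horizontal-edge Gauss point. -/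
def jumpH (c00 c10 c01 c11 : ℕ → ℕ → ℝ) (i j : ℕ) (β : Fin 2) : ℝ :=
  cpH c00 c10 i j β - cmH c01 c11 i j β

/-- Convective flux `û₁c = u₁⁺·c⁺ - α·[c]` at vertical-edge Gauss points. -/
def uc1 (u1 : ℕ → ℕ → Fin 2 → ℝ) (c00 c10 c01 c11 : ℕ → ℕ → ℝ) (α : ℝ)
    (i j : ℕ) (β : Fin 2) : ℝ :=
  u1 i j β * cpV c00 c01 i j β - α * (cpV c00 c01 i j β - cmV c10 c11 i j β)

/-- Convective flux `û₂c = u₂⁺·c⁺ - α·[c]` at horizontal-edge Gauss points. -/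
def uc2 (u2 : ℕ → ℕ → Fin 2 → ℝ) (c00 c10 c01 c11 : ℕ → ℕ → ℝ) (α : ℝ)
    (i j : ℕ) (β : Fin 2) : ℝ :=
  u2 i j β * cpH c00 c10 i j β - α * (cpH c00 c10 i j β - cmH c01 c11 i j β)

/-- Convection part `H^c_{ij}`. -/
def Hc (u1 u2 : ℕ → ℕ → Fin 2 → ℝ) (Φ c00 c10 c01 c11 : ℕ → ℕ → ℝ) (α Δx Δy Δt : ℝ)
    (i j : ℕ) : ℝ :=
  rbar Φ c00 c10 c01 c11 i j / 3
    + (Δt / Δx) * ∑ β : Fin 2, (1 / 2 : ℝ) *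
        (uc1 u1 c00 c10 c01 c11 α (i - 1) j β - uc1 u1 c00 c10 c01 c11 α i j β)
    + (Δt / Δy) * ∑ β : Fin 2, (1 / 2 : ℝ) *
        (uc2 u2 c00 c10 c01 c11 α i (j - 1) β - uc2 u2 c00 c10 c01 c11 α i j β)

/-- Derivative trace `(c_x)⁻` at a vertical-edge Gauss point:
`(c_x)⁻_{i+1/2,β} = (c⁻_{i+1/2,β} - c⁺_{i-1/2,β})/Δx`. -/
def cxmV (c00 c10 c01 c11 : ℕ → ℕ → ℝ) (Δx : ℝ) (i j : ℕ) (β : Fin 2) : ℝ :=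
  (cmV c10 c11 i j β - cpV c00 c01 (i - 1) j β) / Δx

/-- Derivative trace `(c_x)⁺` at a vertical-edge Gauss point:
`(c_x)⁺_{i+1/2,β} = (c⁻_{i+3/2,β} - c⁺_{i+1/2,β})/Δx`. -/
def cxpV (c00 c10 c01 c11 : ℕ → ℕ → ℝ) (Δx : ℝ) (i j : ℕ) (β : Fin 2) : ℝ :=
  (cmV c10 c11 (i + 1) j β - cpV c00 c01 i j β) / Δx

/-- Tangential derivative trace `(c_y)⁻` on a vertical edge:
`(√3/Δy)·(c⁻_{i+1/2,2} - c⁻_{i+1/2,1})` (the same for both Gauss points). -/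
def cymV (c10 c11 : ℕ → ℕ → ℝ) (Δy : ℝ) (i j : ℕ) : ℝ :=
  (Real.sqrt 3 / Δy) * (cmV c10 c11 i j 1 - cmV c10 c11 i j 0)

/-- Tangential derivative trace `(c_y)⁺` on a vertical edge. -/
def cypV (c00 c01 : ℕ → ℕ → ℝ) (Δy : ℝ) (i j : ℕ) : ℝ :=
  (Real.sqrt 3 / Δy) * (cpV c00 c01 i j 1 - cpV c00 c01 i j 0)

/-- Average `{D₁₁c_x + D₁₂c_y}` at a vertical-edge Gauss point. -/
def GxV (D11m D11p D12m D12p : ℕ → ℕ → Fin 2 → ℝ) (c00 c10 c01 c11 : ℕ → ℕ → ℝ)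
    (Δx Δy : ℝ) (i j : ℕ) (β : Fin 2) : ℝ :=
  (D11m i j β * cxmV c00 c10 c01 c11 Δx i j β + D12m i j β * cymV c10 c11 Δy i j
    + D11p i j β * cxpV c00 c10 c01 c11 Δx i j β + D12p i j β * cypV c00 c01 Δy i j) / 2

/-- x-diffusion part `H^d_x`. -/
def Hdx (D11m D11p D12m D12p : ℕ → ℕ → Fin 2 → ℝ) (Φ c00 c10 c01 c11 : ℕ → ℕ → ℝ)
    (αt Δx Δy Δt : ℝ) (i j : ℕ) : ℝ :=
  rbar Φ c00 c10 c01 c11 i j / 6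
    - (Δt / Δx) * ∑ β : Fin 2, (1 / 2 : ℝ) *
        ((GxV D11m D11p D12m D12p c00 c10 c01 c11 Δx Δy (i - 1) j β
            + (αt / Δy) * jumpV c00 c10 c01 c11 (i - 1) j β)
          - (GxV D11m D11p D12m D12p c00 c10 c01 c11 Δx Δy i j β
            + (αt / Δy) * jumpV c00 c10 c01 c11 i j β))

/-- Derivative trace `(c_y)⁻` at a horizontal-edge Gauss point. -/
def cymH (c00 c10 c01 c11 : ℕ → ℕ → ℝ) (Δy : ℝ) (i j : ℕ) (β : Fin 2) : ℝ :=
  (cmH c01 c11 i j β - cpH c00 c10 i (j - 1) β) / Δy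

/-- Derivative trace `(c_y)⁺` at a horizontal-edge Gauss point. -/
def cypH (c00 c10 c01 c11 : ℕ → ℕ → ℝ) (Δy : ℝ) (i j : ℕ) (β : Fin 2) : ℝ :=
  (cmH c01 c11 i (j + 1) β - cpH c00 c10 i j β) / Δy

/-- Tangential derivative trace `(c_x)⁻` on a horizontal edge. -/
def cxmH (c01 c11 : ℕ → ℕ → ℝ) (Δx : ℝ) (i j : ℕ) : ℝ :=
  (Real.sqrt 3 / Δx) * (cmH c01 c11 i j 1 - cmH c01 c11 i j 0)

/-- Tangential derivative trace `(c_x)⁺` on a horizontal edge. -/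
def cxpH (c00 c10 : ℕ → ℕ → ℝ) (Δx : ℝ) (i j : ℕ) : ℝ :=
  (Real.sqrt 3 / Δx) * (cpH c00 c10 i j 1 - cpH c00 c10 i j 0)

/-- Average `{D₂₁c_x + D₂₂c_y}` at a horizontal-edge Gauss point. -/
def GyH (D21m D21p D22m D22p : ℕ → ℕ → Fin 2 → ℝ) (c00 c10 c01 c11 : ℕ → ℕ → ℝ)
    (Δx Δy : ℝ) (i j : ℕ) (β : Fin 2) : ℝ :=
  (D21m i j β * cxmH c01 c11 Δx i j + D22m i j β * cymH c00 c10 c01 c11 Δy i j β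
    + D21p i j β * cxpH c00 c10 Δx i j + D22p i j β * cypH c00 c10 c01 c11 Δy i j β) / 2

/-- y-diffusion part `H^d_y`. -/
def Hdy (D21m D21p D22m D22p : ℕ → ℕ → Fin 2 → ℝ) (Φ c00 c10 c01 c11 : ℕ → ℕ → ℝ)
    (αt Δx Δy Δt : ℝ) (i j : ℕ) : ℝ :=
  rbar Φ c00 c10 c01 c11 i j / 6
    - (Δt / Δy) * ∑ β : Fin 2, (1 / 2 : ℝ) *
        ((GyH D21m D21p D22m D22p c00 c10 c01 c11 Δx Δy i (j - 1) β
            + (αt / Δx) * jumpH c00 c10 c01 c11 i (j - 1) β)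
          - (GyH D21m D21p D22m D22p c00 c10 c01 c11 Δx Δy i j β
            + (αt / Δx) * jumpH c00 c10 c01 c11 i j β))

/-- Value of the bilinear function `c` at the interior Gauss point `(β,γ)` of cell `K_{ij}`. -/
def cGP (c00 c10 c01 c11 : ℕ → ℕ → ℝ) (i j : ℕ) (β γ : Fin 2) : ℝ :=
  ga β (ga γ (c00 i j) (c01 i j)) (ga γ (c10 i j) (c11 i j))

/-- Value of the bilinear function `r = cΦ` at the interior Gauss point `(β,γ)` of `K_{ij}`. -/
def rGP (Φ c00 c10 c01 c11 : ℕ → ℕ → ℝ) (i j : ℕ) (β γ : Fin 2) : ℝ :=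
  ga β (ga γ (c00 i j * Φ (i - 1) (j - 1)) (c01 i j * Φ (i - 1) j))
    (ga γ (c10 i j * Φ i (j - 1)) (c11 i j * Φ i j))

/-- Value of the bilinear interpolant of `Φ` at the interior Gauss point `(β,γ)` of `K_{ij}`. -/
def phiGP (Φ : ℕ → ℕ → ℝ) (i j : ℕ) (β γ : Fin 2) : ℝ :=
  ga β (ga γ (Φ (i - 1) (j - 1)) (Φ (i - 1) j)) (ga γ (Φ i (j - 1)) (Φ i j))

/-- Source part `H^s_{ij}`. -/
def Hs (Φ c00 c10 c01 c11 : ℕ → ℕ → ℝ) (q ct P : ℕ → ℕ → Fin 2 → Fin 2 → ℝ)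
    (z1 Δt : ℝ) (i j : ℕ) : ℝ :=
  rbar Φ c00 c10 c01 c11 i j / 3
    + Δt * ∑ β : Fin 2, ∑ γ : Fin 2, (1 / 2 : ℝ) * (1 / 2 : ℝ) *
        (ct i j β γ * q i j β γ - z1 * rGP Φ c00 c10 c01 c11 i j β γ * P i j β γ)

/-- The Euler-forward cell-average update `r̄^{new}_{ij} = H^c + H^d_x + H^d_y + H^s`. -/
def rbarnew (u1 u2 D11m D11p D12m D12p D21m D21p D22m D22p : ℕ → ℕ → Fin 2 → ℝ)
    (Φ c00 c10 c01 c11 : ℕ → ℕ → ℝ) (q ct P : ℕ → ℕ → Fin 2 → Fin 2 → ℝ)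
    (α αt z1 Δx Δy Δt : ℝ) (i j : ℕ) : ℝ :=
  Hc u1 u2 Φ c00 c10 c01 c11 α Δx Δy Δt i j
    + Hdx D11m D11p D12m D12p Φ c00 c10 c01 c11 αt Δx Δy Δt i j
    + Hdy D21m D21p D22m D22p Φ c00 c10 c01 c11 αt Δx Δy Δt i j
    + Hs Φ c00 c10 c01 c11 q ct P z1 Δt i j

/-
Writing each upwind flux as `û c = α c⁻ - (α - u⁺) c⁺` splits `H^c_{ij}` into inflow terms, carried
by the neighbouring cells with positive coefficients `α` and `α - u⁺`, and outflow terms, linear in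
the four corner values of `c` on `K_{ij}`. Since the Gauss weights `μ₁, μ₂` form a convex combination,
the outflow coefficient of a corner is an average of the coefficients `α - u⁺` and `α` on the two
edges through it, which the CFL condition bounds by `Φ / (6 (λ₁ + λ₂))` at that corner. Summed over
the four corners the outflow is thus at most `r̄_{ij} / 3`, and the strictly positive inflow remains.
-/

open Finset

lemma mu1_pos : 0 < mu1 := by
  unfold mu1
  positivity

lemma mu2_pos : 0 < mu2 := by
  have : Real.sqrt 3 < 3 := by
    rw [Real.sqrt_lt' (by norm_num)]
    norm_num
  unfold mu2
  linarith

lemma mu1_add_mu2 : mu1 + mu2 = 1 := by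
  unfold mu1 mu2
  ring

lemma ga_pos {a b : ℝ} (ha : 0 < a) (hb : 0 < b) (β : Fin 2) : 0 < ga β a b := by
  have := mu1_pos
  have := mu2_pos
  unfold ga
  split_ifs <;> positivity

lemma mu1_mul_add_mu2_mul_le {a b X : ℝ} (ha : a ≤ X) (hb : b ≤ X) : mu1 * a + mu2 * b ≤ X :=
  calc mu1 * a + mu2 * b ≤ mu1 * X + mu2 * X := by
        gcongr
        · exact mu1_pos.le
        · exact mu2_pos.le
    _ = X := by rw [← add_mul, mu1_add_mu2, one_mul]

lemma sum_half_mul_ga_le {g : Fin 2 → ℝ} {x y X Y : ℝ} (hx : 0 ≤ x) (hy : 0 ≤ y)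
    (hX : ∀ β, g β ≤ X) (hY : ∀ β, g β ≤ Y) :
    ∑ β, 1 / 2 * (g β * ga β x y) ≤ (X * x + Y * y) / 2 := by
  have hgX : mu1 * g 0 + mu2 * g 1 ≤ X := mu1_mul_add_mu2_mul_le (hX 0) (hX 1)
  have hgY : mu2 * g 0 + mu1 * g 1 ≤ Y := by
    rw [add_comm]
    exact mu1_mul_add_mu2_mul_le (hY 1) (hY 0)
  calc ∑ β, 1 / 2 * (g β * ga β x y)
      = ((mu1 * g 0 + mu2 * g 1) * x + (mu2 * g 0 + mu1 * g 1) * y) / 2 := by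
        simp only [Fin.sum_univ_two, ga, one_ne_zero, if_true, if_false]
        ring
    _ ≤ (X * x + Y * y) / 2 := by
        gcongr

lemma sum_inflow_pos {α : ℝ} {g : Fin 2 → ℝ} {a b c d : ℝ} (hα : 0 < α) (hg : ∀ β, 0 < g β)
    (ha : 0 < a) (hb : 0 < b) (hc : 0 < c) (hd : 0 < d) :
    0 < ∑ β, 1 / 2 * (α * ga β a b + g β * ga β c d) :=
  sum_pos (fun β _ => by
    have := ga_pos ha hb β
    have := ga_pos hc hd β
    have := hg β
    positivity) univ_nonempty

lemma le_div_six_mul_comm {s g φ : ℝ} (hs : 0 < s) (hg : 0 < g) (h : s ≤ φ / (6 * g)) :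
    g ≤ φ / (6 * s) := by
  rw [le_div_iff₀ (by positivity)] at h ⊢
  linarith

lemma Hc_eq_inflow_sub_outflow (u1 u2 : ℕ → ℕ → Fin 2 → ℝ) (Φ c00 c10 c01 c11 : ℕ → ℕ → ℝ)
    (α Δx Δy Δt : ℝ) {i j : ℕ} (hi : 1 ≤ i) (hj : 1 ≤ j) :
    Hc u1 u2 Φ c00 c10 c01 c11 α Δx Δy Δt i j =
      rbar Φ c00 c10 c01 c11 i j / 3
        + ((Δt / Δx) * ∑ β, 1 / 2 * (α * ga β (c10 (i - 1) j) (c11 (i - 1) j)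
              + (α - u1 i j β) * ga β (c00 (i + 1) j) (c01 (i + 1) j))
          + (Δt / Δy) * ∑ β, 1 / 2 * (α * ga β (c01 i (j - 1)) (c11 i (j - 1))
              + (α - u2 i j β) * ga β (c00 i (j + 1)) (c10 i (j + 1))))
        - ((Δt / Δx) * (∑ β, 1 / 2 * ((α - u1 (i - 1) j β) * ga β (c00 i j) (c01 i j))
              + ∑ β, 1 / 2 * (α * ga β (c10 i j) (c11 i j)))
          + (Δt / Δy) * (∑ β, 1 / 2 * ((α - u2 i (j - 1) β) * ga β (c00 i j) (c10 i j))
              + ∑ β, 1 / 2 * (α * ga β (c01 i j) (c11 i j)))) := by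
  simp only [Hc, uc1, uc2, cpV, cmV, cpH, cmH, Nat.sub_add_cancel hi, Nat.sub_add_cancel hj,
    Fin.sum_univ_two]
  ring

lemma cell_outflow_le {l₁ l₂ x00 x10 x01 x11 φ00 φ10 φ01 φ11 : ℝ} {gL gR gB gT : Fin 2 → ℝ}
    (hl₁ : 0 < l₁) (hl₂ : 0 < l₂)
    (h00 : 0 ≤ x00) (h10 : 0 ≤ x10) (h01 : 0 ≤ x01) (h11 : 0 ≤ x11)
    (hgL : ∀ β, 0 < gL β) (hgR : ∀ β, 0 < gR β) (hgB : ∀ β, 0 < gB β) (hgT : ∀ β, 0 < gT β)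
    (hL : ∀ β, l₁ + l₂ ≤ φ00 / (6 * gL β) ∧ l₁ + l₂ ≤ φ01 / (6 * gL β))
    (hR : ∀ β, l₁ + l₂ ≤ φ10 / (6 * gR β) ∧ l₁ + l₂ ≤ φ11 / (6 * gR β))
    (hB : ∀ β, l₁ + l₂ ≤ φ00 / (6 * gB β) ∧ l₁ + l₂ ≤ φ10 / (6 * gB β))
    (hT : ∀ β, l₁ + l₂ ≤ φ01 / (6 * gT β) ∧ l₁ + l₂ ≤ φ11 / (6 * gT β)) :
    l₁ * (∑ β, 1 / 2 * (gL β * ga β x00 x01) + ∑ β, 1 / 2 * (gR β * ga β x10 x11))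
      + l₂ * (∑ β, 1 / 2 * (gB β * ga β x00 x10) + ∑ β, 1 / 2 * (gT β * ga β x01 x11))
      ≤ (x00 * φ00 + x10 * φ10 + x01 * φ01 + x11 * φ11) / 12 := by
  have hs : 0 < l₁ + l₂ := add_pos hl₁ hl₂
  have eL := sum_half_mul_ga_le h00 h01 (fun β => le_div_six_mul_comm hs (hgL β) (hL β).1)
    (fun β => le_div_six_mul_comm hs (hgL β) (hL β).2)
  have eR := sum_half_mul_ga_le h10 h11 (fun β => le_div_six_mul_comm hs (hgR β) (hR β).1)
    (fun β => le_div_six_mul_comm hs (hgR β) (hR β).2)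
  have eB := sum_half_mul_ga_le h00 h10 (fun β => le_div_six_mul_comm hs (hgB β) (hB β).1)
    (fun β => le_div_six_mul_comm hs (hgB β) (hB β).2)
  have eT := sum_half_mul_ga_le h01 h11 (fun β => le_div_six_mul_comm hs (hgT β) (hT β).1)
    (fun β => le_div_six_mul_comm hs (hgT β) (hT β).2)
  calc _ ≤ l₁ * ((φ00 / (6 * (l₁ + l₂)) * x00 + φ01 / (6 * (l₁ + l₂)) * x01) / 2
            + (φ10 / (6 * (l₁ + l₂)) * x10 + φ11 / (6 * (l₁ + l₂)) * x11) / 2)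
        + l₂ * ((φ00 / (6 * (l₁ + l₂)) * x00 + φ10 / (6 * (l₁ + l₂)) * x10) / 2
            + (φ01 / (6 * (l₁ + l₂)) * x01 + φ11 / (6 * (l₁ + l₂)) * x11) / 2) := by
        gcongr
    _ = (x00 * φ00 + x10 * φ10 + x01 * φ01 + x11 * φ11) / 12 := by
        field_simp
        ring

theorem convection_part_positive_2d_general
    (Nx Ny : ℕ) (Δx Δy Δt : ℝ)
    (hΔx : 0 < Δx) (hΔy : 0 < Δy) (hΔt : 0 < Δt)
    (Φ c00 c10 c01 c11 : ℕ → ℕ → ℝ) (u1 u2 : ℕ → ℕ → Fin 2 → ℝ) (α : ℝ)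
    -- all corner concentration values of all cells strictly positive
    (hc : ∀ i j, 1 ≤ i → i ≤ Nx → 1 ≤ j → j ≤ Ny →
      0 < c00 i j ∧ 0 < c10 i j ∧ 0 < c01 i j ∧ 0 < c11 i j)
    -- α > max{u₁⁺, u₂⁺, 0} over all Gauss points of all interior edges
    (hα0 : 0 < α)
    (hα1 : ∀ i j, 1 ≤ i → i ≤ Nx - 1 → 1 ≤ j → j ≤ Ny → ∀ β : Fin 2, u1 i j β < α)
    (hα2 : ∀ i j, 1 ≤ i → i ≤ Nx → 1 ≤ j → j ≤ Ny - 1 → ∀ β : Fin 2, u2 i j β < α)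
    -- Δt/Δx + Δt/Δy ≤ (1/6)·Φ_m/α  (Φ_m the minimum of Φ over all mesh corners)
    (hCFL0 : ∀ i j, i ≤ Nx → j ≤ Ny → Δt / Δx + Δt / Δy ≤ Φ i j / (6 * α))
    -- Δt/Δx + Δt/Δy ≤ B₁/6
    (hCFL1 : ∀ i j, 1 ≤ i → i ≤ Nx - 1 → 1 ≤ j → j ≤ Ny → ∀ β : Fin 2,
      Δt / Δx + Δt / Δy ≤ Φ i (j - 1) / (6 * (α - u1 i j β)) ∧
      Δt / Δx + Δt / Δy ≤ Φ i j / (6 * (α - u1 i j β)))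
    -- Δt/Δx + Δt/Δy ≤ B₂/6
    (hCFL2 : ∀ i j, 1 ≤ i → i ≤ Nx → 1 ≤ j → j ≤ Ny - 1 → ∀ β : Fin 2,
      Δt / Δx + Δt / Δy ≤ Φ (i - 1) j / (6 * (α - u2 i j β)) ∧
      Δt / Δx + Δt / Δy ≤ Φ i j / (6 * (α - u2 i j β))) :
    ∀ i j, 2 ≤ i → i ≤ Nx - 1 → 2 ≤ j → j ≤ Ny - 1 →
      0 < Hc u1 u2 Φ c00 c10 c01 c11 α Δx Δy Δt i j := by
  intro i j hi hiN hj hjN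
  have hl₁ : 0 < Δt / Δx := div_pos hΔt hΔx
  have hl₂ : 0 < Δt / Δy := div_pos hΔt hΔy
  have gap1 : ∀ i', 1 ≤ i' → i' ≤ i → ∀ β, 0 < α - u1 i' j β := fun i' h1 h2 β =>
    sub_pos.2 (hα1 i' j h1 (by omega) (by omega) (by omega) β)
  have gap2 : ∀ j', 1 ≤ j' → j' ≤ j → ∀ β, 0 < α - u2 i j' β := fun j' h1 h2 β =>
    sub_pos.2 (hα2 i j' (by omega) (by omega) h1 (by omega) β)
  obtain ⟨h00, h10, h01, h11⟩ := hc i j (by omega) (by omega) (by omega) (by omega)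
  obtain ⟨-, hL10, -, hL11⟩ := hc (i - 1) j (by omega) (by omega) (by omega) (by omega)
  obtain ⟨hR00, -, hR01, -⟩ := hc (i + 1) j (by omega) (by omega) (by omega) (by omega)
  obtain ⟨-, -, hB01, hB11⟩ := hc i (j - 1) (by omega) (by omega) (by omega) (by omega)
  obtain ⟨hT00, hT10, -, -⟩ := hc i (j + 1) (by omega) (by omega) (by omega) (by omega)
  have inflow_pos := add_pos
    (mul_pos hl₁ (sum_inflow_pos hα0 (gap1 i (by omega) le_rfl) hL10 hL11 hR00 hR01))
    (mul_pos hl₂ (sum_inflow_pos hα0 (gap2 j (by omega) le_rfl) hB01 hB11 hT00 hT10))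
  have outflow_le_rbar := cell_outflow_le hl₁ hl₂ h00.le h10.le h01.le h11.le
    (gap1 (i - 1) (by omega) (by omega)) (fun _ => hα0)
    (gap2 (j - 1) (by omega) (by omega)) (fun _ => hα0)
    (hCFL1 (i - 1) j (by omega) (by omega) (by omega) (by omega))
    (fun _ => ⟨hCFL0 i (j - 1) (by omega) (by omega), hCFL0 i j (by omega) (by omega)⟩)
    (hCFL2 i (j - 1) (by omega) (by omega) (by omega) (by omega))
    (fun _ => ⟨hCFL0 (i - 1) j (by omega) (by omega), hCFL0 i j (by omega) (by omega)⟩)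
  rw [Hc_eq_inflow_sub_outflow u1 u2 Φ c00 c10 c01 c11 α Δx Δy Δt (by omega) (by omega), rbar]
  linarith

/-- Lemma 3.5 (2D): positivity of the convection part `H^c_{ij}` for interior cells. -/
theorem convection_part_positive_2d
    (Nx Ny : ℕ) (hNx : 4 ≤ Nx) (hNy : 4 ≤ Ny) (Δx Δy Δt : ℝ)
    (hΔx : 0 < Δx) (hΔy : 0 < Δy) (hΔt : 0 < Δt)
    (Φ c00 c10 c01 c11 : ℕ → ℕ → ℝ) (u1 u2 : ℕ → ℕ → Fin 2 → ℝ) (α : ℝ)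
    (hΦ : ∀ i j, i ≤ Nx → j ≤ Ny → 0 < Φ i j)
    -- all corner concentration values of all cells strictly positive
    (hc : ∀ i j, 1 ≤ i → i ≤ Nx → 1 ≤ j → j ≤ Ny →
      0 < c00 i j ∧ 0 < c10 i j ∧ 0 < c01 i j ∧ 0 < c11 i j)
    -- α > max{u₁⁺, u₂⁺, 0} over all Gauss points of all interior edges
    (hα0 : 0 < α)
    (hα1 : ∀ i j, 1 ≤ i → i ≤ Nx - 1 → 1 ≤ j → j ≤ Ny → ∀ β : Fin 2, u1 i j β < α)
    (hα2 : ∀ i j, 1 ≤ i → i ≤ Nx → 1 ≤ j → j ≤ Ny - 1 → ∀ β : Fin 2, u2 i j β < α)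
    -- Δt/Δx + Δt/Δy ≤ (1/6)·Φ_m/α  (Φ_m the minimum of Φ over all mesh corners)
    (hCFL0 : ∀ i j, i ≤ Nx → j ≤ Ny → Δt / Δx + Δt / Δy ≤ Φ i j / (6 * α))
    -- Δt/Δx + Δt/Δy ≤ B₁/6
    (hCFL1 : ∀ i j, 1 ≤ i → i ≤ Nx - 1 → 1 ≤ j → j ≤ Ny → ∀ β : Fin 2,
      Δt / Δx + Δt / Δy ≤ Φ i (j - 1) / (6 * (α - u1 i j β)) ∧
      Δt / Δx + Δt / Δy ≤ Φ i j / (6 * (α - u1 i j β)))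
    -- Δt/Δx + Δt/Δy ≤ B₂/6
    (hCFL2 : ∀ i j, 1 ≤ i → i ≤ Nx → 1 ≤ j → j ≤ Ny - 1 → ∀ β : Fin 2,
      Δt / Δx + Δt / Δy ≤ Φ (i - 1) j / (6 * (α - u2 i j β)) ∧
      Δt / Δx + Δt / Δy ≤ Φ i j / (6 * (α - u2 i j β))) :
    ∀ i j, 2 ≤ i → i ≤ Nx - 1 → 2 ≤ j → j ≤ Ny - 1 →
      0 < Hc u1 u2 Φ c00 c10 c01 c11 α Δx Δy Δt i j :=
  convection_part_positive_2d_general Nx Ny Δx Δy Δt hΔx hΔy hΔt Φ c00 c10 c01 c11 u1 u2 α hc hα0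
    hα1 hα2 hCFL0 hCFL1 hCFL2

end DG2D
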